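/- arXiv:1306.0473 — 6 statements merged into one kernel-verified Lean document; each statement's English description precedes it below -/
import Mathlib

section
/- Let m be a positive integer, let ⋆ be bitwise addition modulo 2 (XOR) on [2^m], let A be a 2^m × 2^m array in which each symbol of [2^{2m}] occurs in exactly one cell (write r*c for the entry of A in cell (r,c)), and let B be a latin square of order 2^m on [2^m] with quasigroup operation ∘. Then the array 𝓐 = {((p,r),(q,c), (q⋆r)*(p⋆c)) : p,q,r,c ∈ [2^m]}, with rows and columns indexed by [2^m]×[2^m] and symbols from [2^{2m}], is a latin square of order 2^{2m}; that is, each symbol of [2^{2m}] occurs exactly once in each row and exactly once in each column of 𝓐. -/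
/-- `A` is a `2^m × 2^m` array in which each symbol of `[2^(2m)]` occurs in exactly one
cell: all entries lie in `[2^(2m)]` and every symbol of `[2^(2m)]` occurs in a unique cell. -/
def IsCellSymbolArray (m : ℕ) (A : ℕ → ℕ → ℕ) : Prop :=
  (∀ r c, r < 2 ^ m → c < 2 ^ m → A r c < 2 ^ (2 * m)) ∧
  (∀ e, e < 2 ^ (2 * m) →
    ∃! rc : ℕ × ℕ, rc.1 < 2 ^ m ∧ rc.2 < 2 ^ m ∧ A rc.1 rc.2 = e)

/-- `B` is (the quasigroup operation of) a latin square of order `N` on `[N]`. -/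
def IsLatinOp (N : ℕ) (B : ℕ → ℕ → ℕ) : Prop :=
  (∀ r c, r < N → c < N → B r c < N) ∧
  (∀ r c₁ c₂, r < N → c₁ < N → c₂ < N → B r c₁ = B r c₂ → c₁ = c₂) ∧
  (∀ r₁ r₂ c, r₁ < N → r₂ < N → c < N → B r₁ c = B r₂ c → r₁ = r₂)

/-!
XOR with a fixed element of `[2^m]` permutes `[2^m]`. Hence, for a fixed row `(p,r)`, the map
`(q,c) ↦ (q ⋆ r, p ⋆ c)` permutes the cells of `A`, and for a fixed column `(q,c)` so does
`(p,r) ↦ (q ⋆ r, p ⋆ c)`; each symbol then occurs exactly once in the row (column) of `𝓐`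
because it occurs in exactly one cell of `A`.
-/

theorem Nat.xor_lt_two_pow_iff {m a x : ℕ} (ha : a < 2 ^ m) : a ^^^ x < 2 ^ m ↔ x < 2 ^ m :=
  ⟨fun h => by simpa using Nat.xor_lt_two_pow ha h, Nat.xor_lt_two_pow ha⟩

def xorTranslate (a b : ℕ) : Equiv.Perm (ℕ × ℕ) := (Equiv.xor a).prodCongr (Equiv.xor b)

@[simp]
theorem xorTranslate_apply (a b : ℕ) (x : ℕ × ℕ) : xorTranslate a b x = (a ^^^ x.1, b ^^^ x.2) :=
  rfl

theorem xorTranslate_lt_two_pow_iff {m a b : ℕ} (ha : a < 2 ^ m) (hb : b < 2 ^ m) (x : ℕ × ℕ) :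
    (xorTranslate a b x).1 < 2 ^ m ∧ (xorTranslate a b x).2 < 2 ^ m ↔
      x.1 < 2 ^ m ∧ x.2 < 2 ^ m := by
  simp only [xorTranslate_apply, Nat.xor_lt_two_pow_iff ha, Nat.xor_lt_two_pow_iff hb]

theorem IsCellSymbolArray.existsUnique_comp_perm {m : ℕ} {A : ℕ → ℕ → ℕ}
    (hA : IsCellSymbolArray m A) (σ : Equiv.Perm (ℕ × ℕ))
    (hσ : ∀ x, (σ x).1 < 2 ^ m ∧ (σ x).2 < 2 ^ m ↔ x.1 < 2 ^ m ∧ x.2 < 2 ^ m)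
    {e : ℕ} (he : e < 2 ^ (2 * m)) :
    ∃! x : ℕ × ℕ, x.1 < 2 ^ m ∧ x.2 < 2 ^ m ∧ A (σ x).1 (σ x).2 = e := by
  refine (existsUnique_congr fun x => ?_).mpr (σ.existsUnique_congr_right.mpr (hA.2 e he))
  rw [← and_assoc, ← and_assoc, hσ]

theorem calA_is_latin_general (m : ℕ) (A : ℕ → ℕ → ℕ)
    (hA : IsCellSymbolArray m A) :
    (∀ p r, p < 2 ^ m → r < 2 ^ m → ∀ e, e < 2 ^ (2 * m) →
      ∃! qc : ℕ × ℕ, qc.1 < 2 ^ m ∧ qc.2 < 2 ^ m ∧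
        A (qc.1 ^^^ r) (p ^^^ qc.2) = e) ∧
    (∀ q c, q < 2 ^ m → c < 2 ^ m → ∀ e, e < 2 ^ (2 * m) →
      ∃! pr : ℕ × ℕ, pr.1 < 2 ^ m ∧ pr.2 < 2 ^ m ∧
        A (q ^^^ pr.2) (pr.1 ^^^ c) = e) := by
  constructor
  · intro p r hp hr e he
    simpa [Nat.xor_comm r] using
      hA.existsUnique_comp_perm (xorTranslate r p) (xorTranslate_lt_two_pow_iff hr hp) he
  · intro q c hq hc e he
    have hσ (x : ℕ × ℕ) := (xorTranslate_lt_two_pow_iff hq hc x.swap).trans and_comm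
    simpa [Nat.xor_comm c] using
      hA.existsUnique_comp_perm ((Equiv.prodComm ℕ ℕ).trans (xorTranslate q c)) hσ he

/-- The array `𝓐`, with rows `(p,r)` and columns `(q,c)` indexed by `[2^m] × [2^m]`
and entry `(q ⋆ r) * (p ⋆ c)` (where `⋆` is XOR and `*` is lookup in `A`), is a latin
square of order `2^(2m)`: each symbol of `[2^(2m)]` occurs exactly once in each row and
exactly once in each column. -/
theorem calA_is_latin (m : ℕ) (hm : 0 < m) (A B : ℕ → ℕ → ℕ)
    (hA : IsCellSymbolArray m A) (hB : IsLatinOp (2 ^ m) B) :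
    (∀ p r, p < 2 ^ m → r < 2 ^ m → ∀ e, e < 2 ^ (2 * m) →
      ∃! qc : ℕ × ℕ, qc.1 < 2 ^ m ∧ qc.2 < 2 ^ m ∧
        A (qc.1 ^^^ r) (p ^^^ qc.2) = e) ∧
    (∀ q c, q < 2 ^ m → c < 2 ^ m → ∀ e, e < 2 ^ (2 * m) →
      ∃! pr : ℕ × ℕ, pr.1 < 2 ^ m ∧ pr.2 < 2 ^ m ∧
        A (q ^^^ pr.2) (pr.1 ^^^ c) = e) :=
  calA_is_latin_general m A hA
end

section
/- Let m be a positive integer, let ⋆ be bitwise addition modulo 2 (XOR) on [2^m], and let B be a latin square of order 2^m on [2^m] with quasigroup operation ∘. Then the array 𝓑 = {((p,r),(q,c), (p⋆q, p⋆((q⋆r)∘(p⋆c)))) : p,q,r,c ∈ [2^m]}, with rows and columns indexed by [2^m]×[2^m] and symbols from [2^m]×[2^m], is a latin square of order 2^{2m}; that is, each symbol of [2^m]×[2^m] occurs exactly once in each row and exactly once in each column of 𝓑. -/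
theorem existsUnique_lt_eq_of_injOn {N s : ℕ} {f : ℕ → ℕ}
    (hmaps : Set.MapsTo f (Set.Iio N) (Set.Iio N)) (hinj : Set.InjOn f (Set.Iio N))
    (hs : s < N) : ∃! x, x < N ∧ f x = s := by
  obtain ⟨x, hx, rfl⟩ :=
    (((Set.finite_Iio N).injOn_iff_bijOn_of_mapsTo hmaps).1 hinj).surjOn hs
  exact ⟨x, ⟨hx, rfl⟩, fun y ⟨hy, hxy⟩ => hinj hy hx hxy⟩

namespace IsLatinOp

variable {N : ℕ} {B : ℕ → ℕ → ℕ}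

theorem existsUnique_col (hB : IsLatinOp N B) {r s : ℕ} (hr : r < N) (hs : s < N) :
    ∃! c, c < N ∧ B r c = s :=
  existsUnique_lt_eq_of_injOn (fun c hc => hB.1 r c hr hc)
    (fun _ h₁ _ h₂ => hB.2.1 r _ _ hr h₁ h₂) hs

theorem existsUnique_row (hB : IsLatinOp N B) {c s : ℕ} (hc : c < N) (hs : s < N) :
    ∃! r, r < N ∧ B r c = s :=
  existsUnique_lt_eq_of_injOn (fun r hr => hB.1 r c hr hc)
    (fun _ h₁ _ h₂ => hB.2.2 _ _ c h₁ h₂ hc) hs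

end IsLatinOp

theorem existsUnique_lt_two_pow_xor {m p : ℕ} {P : ℕ → Prop} (hp : p < 2 ^ m)
    (h : ∃! x, x < 2 ^ m ∧ P x) : ∃! x, x < 2 ^ m ∧ P (p ^^^ x) := by
  obtain ⟨x, ⟨hx, hPx⟩, huniq⟩ := h
  refine ⟨p ^^^ x, ⟨Nat.xor_lt_two_pow hp hx, by rwa [xor_cancel_left]⟩, fun y ⟨hy, hPy⟩ => ?_⟩
  rw [← huniq _ ⟨Nat.xor_lt_two_pow hp hy, hPy⟩, xor_cancel_left]

theorem existsUnique_prod_of_fst_unique {α β : Type*} {P : α → Prop} {Q : α → β → Prop} {a : α}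
    (hP : ∀ x, P x ↔ x = a) (hQ : ∃! y, Q a y) : ∃! xy : α × β, P xy.1 ∧ Q xy.1 xy.2 := by
  obtain ⟨b, hb, huniq⟩ := hQ
  refine ⟨(a, b), ⟨(hP a).2 rfl, hb⟩, fun ⟨x, y⟩ ⟨hx, hy⟩ => ?_⟩
  obtain rfl := (hP x).1 hx
  rw [huniq y hy]

theorem xor_lt_two_pow_and_xor_eq_iff {m p z : ℕ} (hp : p < 2 ^ m) (hz : z < 2 ^ m) (x : ℕ) :
    x < 2 ^ m ∧ p ^^^ x = z ↔ x = p ^^^ z := by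
  rw [xor_eq_iff_right_eq]
  exact ⟨And.right, fun h => ⟨h ▸ Nat.xor_lt_two_pow hp hz, h⟩⟩

theorem calB_is_latin_general (m : ℕ) (B : ℕ → ℕ → ℕ)
    (hB : IsLatinOp (2 ^ m) B) :
    (∀ p r, p < 2 ^ m → r < 2 ^ m → ∀ z d, z < 2 ^ m → d < 2 ^ m →
      ∃! qc : ℕ × ℕ, qc.1 < 2 ^ m ∧ qc.2 < 2 ^ m ∧
        (p ^^^ qc.1, p ^^^ B (qc.1 ^^^ r) (p ^^^ qc.2)) = (z, d)) ∧
    (∀ q c, q < 2 ^ m → c < 2 ^ m → ∀ z d, z < 2 ^ m → d < 2 ^ m →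
      ∃! pr : ℕ × ℕ, pr.1 < 2 ^ m ∧ pr.2 < 2 ^ m ∧
        (pr.1 ^^^ q, pr.1 ^^^ B (q ^^^ pr.2) (pr.1 ^^^ c)) = (z, d)) := by
  constructor
  · intro p r hp hr z d hz hd
    have hc := existsUnique_lt_two_pow_xor hp <|
      hB.existsUnique_col (Nat.xor_lt_two_pow (Nat.xor_lt_two_pow hp hz) hr)
        (Nat.xor_lt_two_pow hp hd)
    refine (existsUnique_congr fun qc => ?_).2 <| existsUnique_prod_of_fst_unique
      (Q := fun q c => c < 2 ^ m ∧ B (q ^^^ r) (p ^^^ c) = p ^^^ d)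
      (xor_lt_two_pow_and_xor_eq_iff hp hz) hc
    simp only [Prod.mk.injEq, xor_eq_iff_right_eq]
    tauto
  · intro q c hq hc z d hz hd
    have hr := existsUnique_lt_two_pow_xor hq <|
      hB.existsUnique_row (Nat.xor_lt_two_pow (Nat.xor_lt_two_pow hq hz) hc)
        (Nat.xor_lt_two_pow (Nat.xor_lt_two_pow hq hz) hd)
    refine (existsUnique_congr fun pr => ?_).2 <| existsUnique_prod_of_fst_unique
      (P := fun p => p < 2 ^ m ∧ q ^^^ p = z)
      (Q := fun p r => r < 2 ^ m ∧ B (q ^^^ r) (p ^^^ c) = p ^^^ d)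
      (xor_lt_two_pow_and_xor_eq_iff hq hz) hr
    simp only [Prod.mk.injEq, xor_eq_iff_right_eq, Nat.xor_comm pr.1 q]
    tauto

/-- The array `𝓑`, with rows `(p,r)` and columns `(q,c)` indexed by `[2^m] × [2^m]`
and entry `(p ⋆ q, p ⋆ ((q ⋆ r) ∘ (p ⋆ c)))` (where `⋆` is XOR and `∘` is lookup in `B`),
is a latin square of order `2^(2m)`: each symbol `(z,d)` of `[2^m] × [2^m]` occurs exactly
once in each row and exactly once in each column. -/
theorem calB_is_latin (m : ℕ) (hm : 0 < m) (B : ℕ → ℕ → ℕ)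
    (hB : IsLatinOp (2 ^ m) B) :
    (∀ p r, p < 2 ^ m → r < 2 ^ m → ∀ z d, z < 2 ^ m → d < 2 ^ m →
      ∃! qc : ℕ × ℕ, qc.1 < 2 ^ m ∧ qc.2 < 2 ^ m ∧
        (p ^^^ qc.1, p ^^^ B (qc.1 ^^^ r) (p ^^^ qc.2)) = (z, d)) ∧
    (∀ q c, q < 2 ^ m → c < 2 ^ m → ∀ z d, z < 2 ^ m → d < 2 ^ m →
      ∃! pr : ℕ × ℕ, pr.1 < 2 ^ m ∧ pr.2 < 2 ^ m ∧
        (pr.1 ^^^ q, pr.1 ^^^ B (q ^^^ pr.2) (pr.1 ^^^ c)) = (z, d)) :=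
  calB_is_latin_general m B hB
end

section
/- Let m be a positive integer, let ⋆ be bitwise addition modulo 2 (XOR) on [2^m], let A be a 2^m × 2^m array in which each symbol of [2^{2m}] occurs in exactly one cell (write r*c for its entry in cell (r,c)), let B be a latin square of order 2^m on [2^m] with quasigroup operation ∘, and let 𝓐 = {((p,r),(q,c), (q⋆r)*(p⋆c)) : p,q,r,c ∈ [2^m]}. For (z,d) ∈ [2^m]×[2^m] let T_{(z,d)} = {((p,r),(q,c),(q⋆r)*(p⋆c)) ∈ 𝓐 : p⋆q = z and p⋆((q⋆r)∘(p⋆c)) = d}. Then for every (z,d) ∈ [2^m]×[2^m] the set T_{(z,d)} is a transversal of 𝓐, and the 2^{2m} sets T_{(z,d)}, (z,d) ∈ [2^m]×[2^m], are pairwise disjoint and partition 𝓐. -/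
/-- The latin square `𝓐 = {((p,r),(q,c),(q ⋆ r) * (p ⋆ c))}` as a set of triples. -/
def calA (m : ℕ) (A : ℕ → ℕ → ℕ) : Set ((ℕ × ℕ) × (ℕ × ℕ) × ℕ) :=
  {t | ∃ p q r c, p < 2 ^ m ∧ q < 2 ^ m ∧ r < 2 ^ m ∧ c < 2 ^ m ∧
    t = ((p, r), (q, c), A (q ^^^ r) (p ^^^ c))}

/-- The set `T_{(z,d)}` of triples of `𝓐` with `p ⋆ q = z` and
`p ⋆ ((q ⋆ r) ∘ (p ⋆ c)) = d`. -/
def Tset (m : ℕ) (A B : ℕ → ℕ → ℕ) (z d : ℕ) : Set ((ℕ × ℕ) × (ℕ × ℕ) × ℕ) :=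
  {t | ∃ p q r c, p < 2 ^ m ∧ q < 2 ^ m ∧ r < 2 ^ m ∧ c < 2 ^ m ∧
    t = ((p, r), (q, c), A (q ^^^ r) (p ^^^ c)) ∧
    p ^^^ q = z ∧ p ^^^ B (q ^^^ r) (p ^^^ c) = d}

/-- A transversal of a latin square `L` of order `N` (given as a set of
(row, column, symbol) triples): a subset of `L` of `N` triples no two of which share a
row, share a column, or share a symbol. -/
def IsTransversal (N : ℕ) (L T : Set ((ℕ × ℕ) × (ℕ × ℕ) × ℕ)) : Prop :=
  T ⊆ L ∧ T.ncard = N ∧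
  ∀ t₁ ∈ T, ∀ t₂ ∈ T, t₁ ≠ t₂ →
    t₁.1 ≠ t₂.1 ∧ t₁.2.1 ≠ t₂.2.1 ∧ t₁.2.2 ≠ t₂.2.2

/-!
Put `q = p ⋆ z`; then `T_{(z,d)}` consists of the triples with `(q ⋆ r) ∘ (p ⋆ c) = p ⋆ d`.
A row `(p, r)` fixes `q` and the row `q ⋆ r` of `B`, in which the symbol `p ⋆ d` occurs
exactly once, so `T_{(z,d)}` meets each of the `2^{2m}` rows exactly once. A column
`(q, c)` fixes `p`, and `p ⋆ d` occurs once in column `p ⋆ c` of `B`. A symbol of `𝓐`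
fixes the cell `(q ⋆ r, p ⋆ c)` of `A`, hence the entry `p ⋆ d` of `B`, hence `p`, `q`,
`r` and `c`. Finally a triple of `𝓐` determines `p, q, r, c` and so lies in exactly one
`T_{(z,d)}`.
-/

theorem IsLatinOp.exists_right_solution {N : ℕ} {B : ℕ → ℕ → ℕ} (hB : IsLatinOp N B)
    {y s : ℕ} (hy : y < N) (hs : s < N) : ∃ x < N, B y x = s := by
  have hinj : Function.Injective (fun x : Fin N => (⟨B y x, hB.1 y x hy x.2⟩ : Fin N)) :=
    fun x₁ x₂ h => Fin.ext (hB.2.1 y x₁ x₂ hy x₁.2 x₂.2 (congrArg Fin.val h))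
  obtain ⟨x, hx⟩ := Finite.surjective_of_injective hinj ⟨s, hs⟩
  exact ⟨x, x.2, congrArg Fin.val hx⟩

theorem IsCellSymbolArray.cell_eq_of_apply_eq {m : ℕ} {A : ℕ → ℕ → ℕ}
    (hA : IsCellSymbolArray m A) {r₁ c₁ r₂ c₂ : ℕ} (hr₁ : r₁ < 2 ^ m) (hc₁ : c₁ < 2 ^ m)
    (hr₂ : r₂ < 2 ^ m) (hc₂ : c₂ < 2 ^ m) (h : A r₁ c₁ = A r₂ c₂) : r₁ = r₂ ∧ c₁ = c₂ := by
  obtain ⟨_, -, huniq⟩ := hA.2 _ (hA.1 r₁ c₁ hr₁ hc₁)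
  exact Prod.mk.inj ((huniq (r₁, c₁) ⟨hr₁, hc₁, rfl⟩).trans
    (huniq (r₂, c₂) ⟨hr₂, hc₂, h.symm⟩).symm)

section Tset

variable {m : ℕ} {A B : ℕ → ℕ → ℕ} {z d : ℕ}

theorem mem_Tset_iff {t : (ℕ × ℕ) × (ℕ × ℕ) × ℕ} :
    t ∈ Tset m A B z d ↔ ∃ p r c, p < 2 ^ m ∧ p ^^^ z < 2 ^ m ∧ r < 2 ^ m ∧ c < 2 ^ m ∧
      t = ((p, r), (p ^^^ z, c), A (p ^^^ z ^^^ r) (p ^^^ c)) ∧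
      B (p ^^^ z ^^^ r) (p ^^^ c) = p ^^^ d := by
  simp only [Tset, Set.mem_ofPred_eq, xor_eq_iff_right_eq]
  constructor
  · rintro ⟨p, _, r, c, hp, hq, hr, hc, rfl, rfl, hpd⟩
    exact ⟨p, r, c, hp, hq, hr, hc, rfl, hpd⟩
  · rintro ⟨p, r, c, hp, hq, hr, hc, rfl, hpd⟩
    exact ⟨p, _, r, c, hp, hq, hr, hc, rfl, rfl, hpd⟩

theorem Tset_subset_calA : Tset m A B z d ⊆ calA m A :=
  fun _ ⟨p, q, r, c, hp, hq, hr, hc, ht, _⟩ => ⟨p, q, r, c, hp, hq, hr, hc, ht⟩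

theorem Tset_injOn_row (hB : IsLatinOp (2 ^ m) B) :
    Set.InjOn (fun t => t.1) (Tset m A B z d) := by
  rintro _ h₁ _ h₂ h
  obtain ⟨p, r, c₁, hp, hq, hr, hc₁, rfl, hpd₁⟩ := mem_Tset_iff.1 h₁
  obtain ⟨_, _, c₂, -, -, -, hc₂, rfl, hpd₂⟩ := mem_Tset_iff.1 h₂
  obtain ⟨rfl, rfl⟩ := Prod.mk.inj h
  have hx : p ^^^ c₁ = p ^^^ c₂ :=
    hB.2.1 _ _ _ (Nat.xor_lt_two_pow hq hr) (Nat.xor_lt_two_pow hp hc₁)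
      (Nat.xor_lt_two_pow hp hc₂) (hpd₁.trans hpd₂.symm)
  rw [Nat.xor_right_inj.1 hx]

theorem Tset_injOn_column (hB : IsLatinOp (2 ^ m) B) :
    Set.InjOn (fun t => t.2.1) (Tset m A B z d) := by
  rintro _ h₁ _ h₂ h
  obtain ⟨p, r₁, c, hp, hq, hr₁, hc, rfl, hpd₁⟩ := mem_Tset_iff.1 h₁
  obtain ⟨p', r₂, _, -, -, hr₂, -, rfl, hpd₂⟩ := mem_Tset_iff.1 h₂
  obtain ⟨hpq, rfl⟩ := Prod.mk.inj h
  obtain rfl : p = p' := Nat.xor_left_inj.1 hpq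
  have hy : p ^^^ z ^^^ r₁ = p ^^^ z ^^^ r₂ :=
    hB.2.2 _ _ _ (Nat.xor_lt_two_pow hq hr₁) (Nat.xor_lt_two_pow hq hr₂)
      (Nat.xor_lt_two_pow hp hc) (hpd₁.trans hpd₂.symm)
  rw [Nat.xor_right_inj.1 hy]

theorem Tset_injOn_symbol (hA : IsCellSymbolArray m A) :
    Set.InjOn (fun t => t.2.2) (Tset m A B z d) := by
  rintro _ h₁ _ h₂ h
  obtain ⟨p, r₁, c₁, hp, hq, hr₁, hc₁, rfl, hpd₁⟩ := mem_Tset_iff.1 h₁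
  obtain ⟨p', r₂, c₂, hp', hq', hr₂, hc₂, rfl, hpd₂⟩ := mem_Tset_iff.1 h₂
  obtain ⟨hy, hx⟩ := hA.cell_eq_of_apply_eq (Nat.xor_lt_two_pow hq hr₁)
    (Nat.xor_lt_two_pow hp hc₁) (Nat.xor_lt_two_pow hq' hr₂) (Nat.xor_lt_two_pow hp' hc₂) h
  obtain rfl : p = p' := by
    rw [hy, hx] at hpd₁
    exact Nat.xor_left_inj.1 (hpd₁.symm.trans hpd₂)
  rw [Nat.xor_right_inj.1 hy, Nat.xor_right_inj.1 hx]

theorem image_row_Tset (hB : IsLatinOp (2 ^ m) B) (hz : z < 2 ^ m) (hd : d < 2 ^ m) :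
    (fun t => t.1) '' Tset m A B z d = Set.Iio (2 ^ m) ×ˢ Set.Iio (2 ^ m) := by
  refine subset_antisymm ?_ ?_
  · rintro _ ⟨_, ht, rfl⟩
    obtain ⟨p, r, c, hp, -, hr, -, rfl, -⟩ := mem_Tset_iff.1 ht
    exact ⟨hp, hr⟩
  · rintro ⟨p, r⟩ ⟨hp, hr⟩
    have hq := Nat.xor_lt_two_pow hp hz
    obtain ⟨x, hx, hBx⟩ :=
      hB.exists_right_solution (Nat.xor_lt_two_pow hq hr) (Nat.xor_lt_two_pow hp hd)
    refine ⟨_, mem_Tset_iff.2 ⟨p, r, p ^^^ x, hp, hq, hr, Nat.xor_lt_two_pow hp hx, rfl, ?_⟩, rfl⟩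
    rwa [Nat.xor_xor_cancel_left]

theorem ncard_Tset (hB : IsLatinOp (2 ^ m) B) (hz : z < 2 ^ m) (hd : d < 2 ^ m) :
    (Tset m A B z d).ncard = 2 ^ (2 * m) := by
  rw [← (Tset_injOn_row hB).ncard_image, image_row_Tset hB hz hd, Set.ncard_prod,
    Set.ncard_Iio_nat, two_mul, pow_add]

theorem isTransversal_Tset (hA : IsCellSymbolArray m A) (hB : IsLatinOp (2 ^ m) B)
    (hz : z < 2 ^ m) (hd : d < 2 ^ m) :
    IsTransversal (2 ^ (2 * m)) (calA m A) (Tset m A B z d) :=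
  ⟨Tset_subset_calA, ncard_Tset hB hz hd, fun _ h₁ _ h₂ hne =>
    ⟨mt (Tset_injOn_row hB h₁ h₂) hne, mt (Tset_injOn_column hB h₁ h₂) hne,
      mt (Tset_injOn_symbol hA h₁ h₂) hne⟩⟩

theorem eq_of_mem_Tset_of_mem_Tset {z₁ d₁ z₂ d₂ : ℕ} {t : (ℕ × ℕ) × (ℕ × ℕ) × ℕ}
    (h₁ : t ∈ Tset m A B z₁ d₁) (h₂ : t ∈ Tset m A B z₂ d₂) : (z₁, d₁) = (z₂, d₂) := by
  obtain ⟨p, q, r, c, -, -, -, -, rfl, rfl, rfl⟩ := h₁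
  obtain ⟨_, _, _, _, -, -, -, -, ht, rfl, rfl⟩ := h₂
  simp only [Prod.mk.injEq] at ht
  obtain ⟨⟨rfl, rfl⟩, ⟨rfl, rfl⟩, -⟩ := ht
  rfl

theorem iUnion_Tset (hB : IsLatinOp (2 ^ m) B) :
    ⋃ z ∈ Set.Iio (2 ^ m), ⋃ d ∈ Set.Iio (2 ^ m), Tset m A B z d = calA m A := by
  refine subset_antisymm (Set.iUnion₂_subset fun _ _ => Set.iUnion₂_subset
    fun _ _ => Tset_subset_calA) ?_
  rintro _ ⟨p, q, r, c, hp, hq, hr, hc, rfl⟩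
  have hy := Nat.xor_lt_two_pow hq hr
  have hx := Nat.xor_lt_two_pow hp hc
  exact Set.mem_biUnion (Nat.xor_lt_two_pow hp hq) <|
    Set.mem_biUnion (Nat.xor_lt_two_pow hp (hB.1 _ _ hy hx))
      ⟨p, q, r, c, hp, hq, hr, hc, rfl, rfl, rfl⟩

end Tset

theorem Tsets_partition_into_transversals_general (m : ℕ) (A B : ℕ → ℕ → ℕ)
    (hA : IsCellSymbolArray m A) (hB : IsLatinOp (2 ^ m) B) :
    (∀ z d, z < 2 ^ m → d < 2 ^ m →
      IsTransversal (2 ^ (2 * m)) (calA m A) (Tset m A B z d)) ∧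
    (∀ z₁ d₁ z₂ d₂, z₁ < 2 ^ m → d₁ < 2 ^ m → z₂ < 2 ^ m → d₂ < 2 ^ m →
      (z₁, d₁) ≠ (z₂, d₂) → Tset m A B z₁ d₁ ∩ Tset m A B z₂ d₂ = ∅) ∧
    (⋃ z ∈ Set.Iio (2 ^ m), ⋃ d ∈ Set.Iio (2 ^ m), Tset m A B z d) = calA m A :=
  ⟨fun _ _ hz hd => isTransversal_Tset hA hB hz hd,
    fun _ _ _ _ _ _ _ _ hne => Set.eq_empty_of_forall_notMem fun _ ⟨h₁, h₂⟩ =>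
      hne (eq_of_mem_Tset_of_mem_Tset h₁ h₂),
    iUnion_Tset hB⟩

/-- Each `T_{(z,d)}`, `(z,d) ∈ [2^m] × [2^m]`, is a transversal of `𝓐`, and these
`2^(2m)` sets are pairwise disjoint and partition `𝓐`. -/
theorem Tsets_partition_into_transversals (m : ℕ) (hm : 0 < m) (A B : ℕ → ℕ → ℕ)
    (hA : IsCellSymbolArray m A) (hB : IsLatinOp (2 ^ m) B) :
    (∀ z d, z < 2 ^ m → d < 2 ^ m →
      IsTransversal (2 ^ (2 * m)) (calA m A) (Tset m A B z d)) ∧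
    (∀ z₁ d₁ z₂ d₂, z₁ < 2 ^ m → d₁ < 2 ^ m → z₂ < 2 ^ m → d₂ < 2 ^ m →
      (z₁, d₁) ≠ (z₂, d₂) → Tset m A B z₁ d₁ ∩ Tset m A B z₂ d₂ = ∅) ∧
    (⋃ z ∈ Set.Iio (2 ^ m), ⋃ d ∈ Set.Iio (2 ^ m), Tset m A B z d) = calA m A :=
  Tsets_partition_into_transversals_general m A B hA hB
end

section
/- Let m be a positive integer, let ⋆ be bitwise addition modulo 2 (XOR) on [2^m], let A be a 2^m × 2^m array in which each symbol of [2^{2m}] occurs in exactly one cell (write r*c for its entry in cell (r,c)), and let B be a latin square of order 2^m on [2^m] with quasigroup operation ∘. Then the latin squares 𝓐 = {((p,r),(q,c), (q⋆r)*(p⋆c)) : p,q,r,c ∈ [2^m]} and 𝓑 = {((p,r),(q,c), (p⋆q, p⋆((q⋆r)∘(p⋆c)))) : p,q,r,c ∈ [2^m]}, of order 2^{2m}, are orthogonal: whenever two distinct cells of 𝓐 carry the same symbol, the corresponding two cells of 𝓑 carry distinct symbols. -/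
/-!
The array `A` is injective on cells, so equal `𝓐`-symbols force equal cells `(q ⋆ r, p ⋆ c)`
of `A`. The two `∘`-entries then coincide, so the second coordinate of the `𝓑`-symbol
determines `p`, its first coordinate `p ⋆ q` then determines `q`, and `q ⋆ r`, `p ⋆ c`
determine `r` and `c`.
-/

theorem IsCellSymbolArray.injOn {m : ℕ} {A : ℕ → ℕ → ℕ} (hA : IsCellSymbolArray m A) :
    Set.InjOn (Function.uncurry A) (Set.Iio (2 ^ m) ×ˢ Set.Iio (2 ^ m)) := by
  rintro ⟨r₁, c₁⟩ ⟨hr₁, hc₁⟩ ⟨r₂, c₂⟩ ⟨hr₂, hc₂⟩ h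
  exact (hA.2 _ (hA.1 r₂ c₂ hr₂ hc₂)).unique ⟨hr₁, hc₁, h⟩ ⟨hr₂, hc₂, rfl⟩

theorem calA_calB_orthogonal_general (m : ℕ) (A B : ℕ → ℕ → ℕ)
    (hA : IsCellSymbolArray m A) :
    ∀ p₁ r₁ q₁ c₁ p₂ r₂ q₂ c₂ : ℕ,
      p₁ < 2 ^ m → r₁ < 2 ^ m → q₁ < 2 ^ m → c₁ < 2 ^ m →
      p₂ < 2 ^ m → r₂ < 2 ^ m → q₂ < 2 ^ m → c₂ < 2 ^ m →
      (((p₁, r₁), (q₁, c₁)) : (ℕ × ℕ) × (ℕ × ℕ)) ≠ ((p₂, r₂), (q₂, c₂)) →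
      A (q₁ ^^^ r₁) (p₁ ^^^ c₁) = A (q₂ ^^^ r₂) (p₂ ^^^ c₂) →
      (p₁ ^^^ q₁, p₁ ^^^ B (q₁ ^^^ r₁) (p₁ ^^^ c₁)) ≠
        (p₂ ^^^ q₂, p₂ ^^^ B (q₂ ^^^ r₂) (p₂ ^^^ c₂)) := by
  intro p₁ r₁ q₁ c₁ p₂ r₂ q₂ c₂ hp₁ hr₁ hq₁ hc₁ hp₂ hr₂ hq₂ hc₂ hne hAeq hBeq
  have hcell : (q₁ ^^^ r₁, p₁ ^^^ c₁) = (q₂ ^^^ r₂, p₂ ^^^ c₂) :=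
    hA.injOn (Set.mk_mem_prod (Nat.xor_lt_two_pow hq₁ hr₁) (Nat.xor_lt_two_pow hp₁ hc₁))
      (Set.mk_mem_prod (Nat.xor_lt_two_pow hq₂ hr₂) (Nat.xor_lt_two_pow hp₂ hc₂)) hAeq
  simp only [Prod.mk.injEq] at hcell hBeq
  obtain ⟨hqr, hpc⟩ := hcell
  obtain ⟨hpq, hpB⟩ := hBeq
  obtain rfl : p₁ = p₂ := by rwa [hqr, hpc, Nat.xor_left_inj] at hpB
  obtain rfl : q₁ = q₂ := Nat.xor_right_inj.mp hpq
  rw [Nat.xor_right_inj] at hqr hpc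
  exact hne (by rw [hqr, hpc])

/-- The latin squares `𝓐` (with entry `(q ⋆ r) * (p ⋆ c)` in cell `((p,r),(q,c))`) and
`𝓑` (with entry `(p ⋆ q, p ⋆ ((q ⋆ r) ∘ (p ⋆ c)))` in cell `((p,r),(q,c))`) of order
`2^(2m)` are orthogonal: whenever two distinct cells of `𝓐` carry the same symbol, the
corresponding two cells of `𝓑` carry distinct symbols. -/
theorem calA_calB_orthogonal (m : ℕ) (hm : 0 < m) (A B : ℕ → ℕ → ℕ)
    (hA : IsCellSymbolArray m A) (hB : IsLatinOp (2 ^ m) B) :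
    ∀ p₁ r₁ q₁ c₁ p₂ r₂ q₂ c₂ : ℕ,
      p₁ < 2 ^ m → r₁ < 2 ^ m → q₁ < 2 ^ m → c₁ < 2 ^ m →
      p₂ < 2 ^ m → r₂ < 2 ^ m → q₂ < 2 ^ m → c₂ < 2 ^ m →
      (((p₁, r₁), (q₁, c₁)) : (ℕ × ℕ) × (ℕ × ℕ)) ≠ ((p₂, r₂), (q₂, c₂)) →
      A (q₁ ^^^ r₁) (p₁ ^^^ c₁) = A (q₂ ^^^ r₂) (p₂ ^^^ c₂) →
      (p₁ ^^^ q₁, p₁ ^^^ B (q₁ ^^^ r₁) (p₁ ^^^ c₁)) ≠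
        (p₂ ^^^ q₂, p₂ ^^^ B (q₂ ^^^ r₂) (p₂ ^^^ c₂)) :=
  calA_calB_orthogonal_general m A B hA
end

section
/- Let m be a positive integer, let ⋆ be bitwise addition modulo 2 (XOR) on [2^m], let A be a 2^m × 2^m array in which each symbol of [2^{2m}] occurs in exactly one cell (write r*c for its entry in cell (r,c)), let B be a latin square of order 2^m on [2^m] with quasigroup operation ∘, and let 𝓐 = {((p,r),(q,c), (q⋆r)*(p⋆c)) : p,q,r,c ∈ [2^m]}. Let r1,r2,c1,c2 ∈ [2^m] satisfy r1 ≠ r2, c1 ≠ c2, r1∘c1 ≠ r2∘c2, and r1⋆r2 ≠ c1⋆c2. Set s = (r1∘c1)⋆(r2∘c2), R1=(0,r2), R2=(c1⋆c2, r1), R3=(c1⋆c2⋆s, r2⋆s), R4=(s, r1⋆s), K1=(0,c2), K2=(r1⋆r2, c1), K3=(r1⋆r2⋆s, c2⋆s), K4=(s, c1⋆s), and let I_A(r1,c1;r2,c2) = {(R1,K1,r2*c2), (R1,K2,r1*c1), (R2,K1,r1*c1), (R2,K2,r2*c2), (R3,K3,r1*c1), (R3,K4,r2*c2), (R4,K3,r2*c2),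 (R4,K4,r1*c1)}. Then: (i) I_A(r1,c1;r2,c2) ⊆ 𝓐; (ii) R1,R2,R3,R4 are pairwise distinct and K1,K2,K3,K4 are pairwise distinct (so I_A(r1,c1;r2,c2) is the union of the two intercalates {(R1,K1,r2*c2),(R1,K2,r1*c1),(R2,K1,r1*c1),(R2,K2,r2*c2)} and {(R3,K3,r1*c1),(R3,K4,r2*c2),(R4,K3,r2*c2),(R4,K4,r1*c1)}); and (iii) the eight cells lie in eight distinct 2^m × 2^m subsquares of 𝓐, i.e. the eight pairs (first coordinate of the row index, first coordinate of the column index) are pairwise distinct. -/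
/-- The configuration `I_A(r₁,c₁;r₂,c₂)` (the union of two intercalates of `𝓐`),
with `s = (r₁ ∘ c₁) ⋆ (r₂ ∘ c₂)`, rows `R₁ = (0,r₂)`, `R₂ = (c₁ ⋆ c₂, r₁)`,
`R₃ = (c₁ ⋆ c₂ ⋆ s, r₂ ⋆ s)`, `R₄ = (s, r₁ ⋆ s)` and columns `K₁ = (0,c₂)`,
`K₂ = (r₁ ⋆ r₂, c₁)`, `K₃ = (r₁ ⋆ r₂ ⋆ s, c₂ ⋆ s)`, `K₄ = (s, c₁ ⋆ s)`. -/
def IAset (A B : ℕ → ℕ → ℕ) (r₁ c₁ r₂ c₂ : ℕ) : Set ((ℕ × ℕ) × (ℕ × ℕ) × ℕ) :=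
  let s := B r₁ c₁ ^^^ B r₂ c₂
  {((0, r₂), (0, c₂), A r₂ c₂), ((0, r₂), (r₁ ^^^ r₂, c₁), A r₁ c₁),
   ((c₁ ^^^ c₂, r₁), (0, c₂), A r₁ c₁), ((c₁ ^^^ c₂, r₁), (r₁ ^^^ r₂, c₁), A r₂ c₂),
   ((c₁ ^^^ c₂ ^^^ s, r₂ ^^^ s), (r₁ ^^^ r₂ ^^^ s, c₂ ^^^ s), A r₁ c₁),
   ((c₁ ^^^ c₂ ^^^ s, r₂ ^^^ s), (s, c₁ ^^^ s), A r₂ c₂),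
   ((s, r₁ ^^^ s), (r₁ ^^^ r₂ ^^^ s, c₂ ^^^ s), A r₂ c₂),
   ((s, r₁ ^^^ s), (s, c₁ ^^^ s), A r₁ c₁)}

/-!
Put `a = r₁ ⋆ r₂`, `b = c₁ ⋆ c₂` and `s = (r₁ ∘ c₁) ⋆ (r₂ ∘ c₂)`; the first three inequalities
say that `a`, `b`, `s` are nonzero. Each cell of `I_A` lies in `𝓐` because `⋆` cancels. The
block coordinates of the eight cells are `{0, b} × {0, a}` together with its translate by
`(s, s)`; as `s ≠ 0`, a coincidence between the two halves forces `b = s = a`, which `a ≠ b`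
rules out. Rows and columns are separated in the same way.
-/

section LawfulXor

variable {α : Type*} [XorOp α] [Zero α] [LawfulXor α]

@[simp] lemma self_eq_xor_left_iff {a b : α} : a = a ^^^ b ↔ b = 0 := by
  rw [eq_comm, xor_left_eq_self_iff]

@[simp] lemma self_eq_xor_right_iff {a b : α} : a = b ^^^ a ↔ b = 0 := by
  rw [eq_comm, xor_right_eq_self_iff]

@[simp] lemma zero_eq_xor_iff {a b : α} : 0 = a ^^^ b ↔ a = b := by
  rw [eq_comm, xor_eq_zero_iff]

theorem intercalate_lines_pairwise_ne {b s : α} (hb : b ≠ 0) (hs : s ≠ 0) (u v : α) :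
    [(0, v), (b, u), (b ^^^ s, v ^^^ s), (s, u ^^^ s)].Pairwise (· ≠ ·) := by
  simp [hb, hs, hb.symm, hs.symm]

theorem intercalate_blocks_pairwise_ne {a b s : α} (ha : a ≠ 0) (hb : b ≠ 0) (hs : s ≠ 0)
    (hab : a ≠ b) :
    [(0, 0), (0, a), (b, 0), (b, a),
      (b ^^^ s, a ^^^ s), (b ^^^ s, s), (s, a ^^^ s), (s, s)].Pairwise (· ≠ ·) := by
  -- the one pair, `(b ⋆ s, s)` and `(s, a ⋆ s)`, that `a, b, s ≠ 0` alone does not separate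
  suffices b = s → a ≠ s by simpa [ha, hb, hs, ha.symm, hb.symm, hs.symm]
  rintro rfl rfl
  exact hab rfl

end LawfulXor

theorem mem_calA_of_xor_eq {m : ℕ} {A : ℕ → ℕ → ℕ} {p q r c x y : ℕ} (hp : p < 2 ^ m)
    (hq : q < 2 ^ m) (hr : r < 2 ^ m) (hc : c < 2 ^ m) (hx : q ^^^ r = x) (hy : p ^^^ c = y) :
    ((p, r), (q, c), A x y) ∈ calA m A :=
  ⟨p, q, r, c, hp, hq, hr, hc, by rw [hx, hy]⟩

theorem IAset_subset_calA {m : ℕ} {A B : ℕ → ℕ → ℕ} {r₁ c₁ r₂ c₂ : ℕ}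
    (hr₁ : r₁ < 2 ^ m) (hr₂ : r₂ < 2 ^ m) (hc₁ : c₁ < 2 ^ m) (hc₂ : c₂ < 2 ^ m)
    (hs : B r₁ c₁ ^^^ B r₂ c₂ < 2 ^ m) :
    IAset A B r₁ c₁ r₂ c₂ ⊆ calA m A := by
  intro t ht
  simp only [IAset, Set.mem_insert_iff, Set.mem_singleton_iff] at ht
  generalize B r₁ c₁ ^^^ B r₂ c₂ = s at hs ht
  have h0 : 0 < 2 ^ m := Nat.two_pow_pos m
  rcases ht with rfl | rfl | rfl | rfl | rfl | rfl | rfl | rfl <;>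
    refine mem_calA_of_xor_eq ?_ ?_ ?_ ?_ ?_ ?_ <;>
    first
    | (repeat' apply Nat.xor_lt_two_pow) <;> assumption
    | simp [xor_assoc]

theorem IA_two_intercalates_general (m : ℕ) (A B : ℕ → ℕ → ℕ)
    (hB : IsLatinOp (2 ^ m) B)
    (r₁ r₂ c₁ c₂ : ℕ) (hr₁ : r₁ < 2 ^ m) (hr₂ : r₂ < 2 ^ m)
    (hc₁ : c₁ < 2 ^ m) (hc₂ : c₂ < 2 ^ m)
    (h₁ : r₁ ≠ r₂) (h₂ : c₁ ≠ c₂) (h₃ : B r₁ c₁ ≠ B r₂ c₂)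
    (h₄ : r₁ ^^^ r₂ ≠ c₁ ^^^ c₂) :
    IAset A B r₁ c₁ r₂ c₂ ⊆ calA m A ∧
    (let s := B r₁ c₁ ^^^ B r₂ c₂
     ([((0 : ℕ), r₂), (c₁ ^^^ c₂, r₁), (c₁ ^^^ c₂ ^^^ s, r₂ ^^^ s),
       (s, r₁ ^^^ s)] : List (ℕ × ℕ)).Pairwise (· ≠ ·) ∧
     ([((0 : ℕ), c₂), (r₁ ^^^ r₂, c₁), (r₁ ^^^ r₂ ^^^ s, c₂ ^^^ s),
       (s, c₁ ^^^ s)] : List (ℕ × ℕ)).Pairwise (· ≠ ·)) ∧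
    (let s := B r₁ c₁ ^^^ B r₂ c₂
     ([((0 : ℕ), (0 : ℕ)), (0, r₁ ^^^ r₂), (c₁ ^^^ c₂, 0), (c₁ ^^^ c₂, r₁ ^^^ r₂),
       (c₁ ^^^ c₂ ^^^ s, r₁ ^^^ r₂ ^^^ s), (c₁ ^^^ c₂ ^^^ s, s),
       (s, r₁ ^^^ r₂ ^^^ s), (s, s)] : List (ℕ × ℕ)).Pairwise (· ≠ ·)) := by
  have hr : r₁ ^^^ r₂ ≠ 0 := xor_eq_zero_iff.not.mpr h₁
  have hc : c₁ ^^^ c₂ ≠ 0 := xor_eq_zero_iff.not.mpr h₂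
  have hs : B r₁ c₁ ^^^ B r₂ c₂ ≠ 0 := xor_eq_zero_iff.not.mpr h₃
  have hs_lt : B r₁ c₁ ^^^ B r₂ c₂ < 2 ^ m :=
    Nat.xor_lt_two_pow (hB.1 r₁ c₁ hr₁ hc₁) (hB.1 r₂ c₂ hr₂ hc₂)
  exact ⟨IAset_subset_calA hr₁ hr₂ hc₁ hc₂ hs_lt,
    ⟨intercalate_lines_pairwise_ne hc hs r₁ r₂, intercalate_lines_pairwise_ne hr hs c₁ c₂⟩,
    intercalate_blocks_pairwise_ne hr hc hs h₄⟩

/-- Lemma 3.1: under Conditions C1–C4, `I_A(r₁,c₁;r₂,c₂) ⊆ 𝓐`;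
its four rows `R₁,…,R₄` are pairwise distinct, its four columns `K₁,…,K₄` are pairwise
distinct (so it is the union of two intercalates); and its eight cells lie in eight
distinct `2^m × 2^m` subsquares of `𝓐` (the eight pairs of block coordinates are
pairwise distinct). -/
theorem IA_two_intercalates (m : ℕ) (hm : 0 < m) (A B : ℕ → ℕ → ℕ)
    (hA : IsCellSymbolArray m A) (hB : IsLatinOp (2 ^ m) B)
    (r₁ r₂ c₁ c₂ : ℕ) (hr₁ : r₁ < 2 ^ m) (hr₂ : r₂ < 2 ^ m)
    (hc₁ : c₁ < 2 ^ m) (hc₂ : c₂ < 2 ^ m)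
    (h₁ : r₁ ≠ r₂) (h₂ : c₁ ≠ c₂) (h₃ : B r₁ c₁ ≠ B r₂ c₂)
    (h₄ : r₁ ^^^ r₂ ≠ c₁ ^^^ c₂) :
    IAset A B r₁ c₁ r₂ c₂ ⊆ calA m A ∧
    (let s := B r₁ c₁ ^^^ B r₂ c₂
     ([((0 : ℕ), r₂), (c₁ ^^^ c₂, r₁), (c₁ ^^^ c₂ ^^^ s, r₂ ^^^ s),
       (s, r₁ ^^^ s)] : List (ℕ × ℕ)).Pairwise (· ≠ ·) ∧
     ([((0 : ℕ), c₂), (r₁ ^^^ r₂, c₁), (r₁ ^^^ r₂ ^^^ s, c₂ ^^^ s),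
       (s, c₁ ^^^ s)] : List (ℕ × ℕ)).Pairwise (· ≠ ·)) ∧
    (let s := B r₁ c₁ ^^^ B r₂ c₂
     ([((0 : ℕ), (0 : ℕ)), (0, r₁ ^^^ r₂), (c₁ ^^^ c₂, 0), (c₁ ^^^ c₂, r₁ ^^^ r₂),
       (c₁ ^^^ c₂ ^^^ s, r₁ ^^^ r₂ ^^^ s), (c₁ ^^^ c₂ ^^^ s, s),
       (s, r₁ ^^^ r₂ ^^^ s), (s, s)] : List (ℕ × ℕ)).Pairwise (· ≠ ·)) :=
  IA_two_intercalates_general m A B hB r₁ r₂ c₁ c₂ hr₁ hr₂ hc₁ hc₂ h₁ h₂ h₃ h₄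
end

section
/- Let m be a positive integer, let ⋆ be bitwise addition modulo 2 (XOR) on [2^m], let B be a latin square of order 2^m on [2^m] with quasigroup operation ∘, and let 𝓑 = {((p,r),(q,c), (p⋆q, p⋆((q⋆r)∘(p⋆c)))) : p,q,r,c ∈ [2^m]}. Let r1,r2,c1,c2 ∈ [2^m] satisfy r1 ≠ r2, c1 ≠ c2, r1∘c1 ≠ r2∘c2, and r1⋆r2 ≠ c1⋆c2. Set s = (r1∘c1)⋆(r2∘c2), R1=(0,r2), R2=(c1⋆c2, r1), R3=(c1⋆c2⋆s, r2⋆s), R4=(s, r1⋆s), K1=(0,c2), K2=(r1⋆r2, c1), K3=(r1⋆r2⋆s, c2⋆s), K4=(s, c1⋆s). Then 𝓑 contains the eight triples (R1,K1,(0, r2∘c2)), (R1,K2,(r1⋆r2, r1∘c1)), (R2,K1,(c1⋆c2, c1⋆c2⋆(r1∘c1))), (R2,K2,(r1⋆r2⋆c1⋆c2, c1⋆c2⋆(r2∘c2))), (R3,K3,(r1⋆r2⋆c1⋆c2, c1⋆c2⋆(r2∘c2))), (R3,K4,(c1⋆c2, c1⋆c2⋆(r1∘c1))), (R4,K3,(r1⋆r2,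 r1∘c1)), and (R4,K4,(0, r2∘c2)). -/
/-- The latin square `𝓑 = {((p,r),(q,c),(p ⋆ q, p ⋆ ((q ⋆ r) ∘ (p ⋆ c))))}` as a set of
triples. -/
def calB (m : ℕ) (B : ℕ → ℕ → ℕ) : Set ((ℕ × ℕ) × (ℕ × ℕ) × (ℕ × ℕ)) :=
  {t | ∃ p q r c, p < 2 ^ m ∧ q < 2 ^ m ∧ r < 2 ^ m ∧ c < 2 ^ m ∧
    t = ((p, r), (q, c), (p ^^^ q, p ^^^ B (q ^^^ r) (p ^^^ c)))}

theorem mem_calB_of_eq {m : ℕ} {B : ℕ → ℕ → ℕ} {p q r c x y : ℕ}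
    (hp : p < 2 ^ m) (hq : q < 2 ^ m) (hr : r < 2 ^ m) (hc : c < 2 ^ m)
    (hx : x = p ^^^ q) (hy : y = p ^^^ B (q ^^^ r) (p ^^^ c)) :
    ((p, r), (q, c), (x, y)) ∈ calB m B :=
  ⟨p, q, r, c, hp, hq, hr, hc, by rw [hx, hy]⟩

theorem JB_entries_general (m : ℕ) (B : ℕ → ℕ → ℕ)
    (hB : IsLatinOp (2 ^ m) B)
    (r₁ r₂ c₁ c₂ : ℕ) (hr₁ : r₁ < 2 ^ m) (hr₂ : r₂ < 2 ^ m)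
    (hc₁ : c₁ < 2 ^ m) (hc₂ : c₂ < 2 ^ m) :
    let s := B r₁ c₁ ^^^ B r₂ c₂
    (((0, r₂), (0, c₂), ((0 : ℕ), B r₂ c₂)) ∈ calB m B) ∧
    (((0, r₂), (r₁ ^^^ r₂, c₁), (r₁ ^^^ r₂, B r₁ c₁)) ∈ calB m B) ∧
    (((c₁ ^^^ c₂, r₁), (0, c₂), (c₁ ^^^ c₂, c₁ ^^^ c₂ ^^^ B r₁ c₁)) ∈ calB m B) ∧
    (((c₁ ^^^ c₂, r₁), (r₁ ^^^ r₂, c₁),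
      (r₁ ^^^ r₂ ^^^ c₁ ^^^ c₂, c₁ ^^^ c₂ ^^^ B r₂ c₂)) ∈ calB m B) ∧
    (((c₁ ^^^ c₂ ^^^ s, r₂ ^^^ s), (r₁ ^^^ r₂ ^^^ s, c₂ ^^^ s),
      (r₁ ^^^ r₂ ^^^ c₁ ^^^ c₂, c₁ ^^^ c₂ ^^^ B r₂ c₂)) ∈ calB m B) ∧
    (((c₁ ^^^ c₂ ^^^ s, r₂ ^^^ s), (s, c₁ ^^^ s),
      (c₁ ^^^ c₂, c₁ ^^^ c₂ ^^^ B r₁ c₁)) ∈ calB m B) ∧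
    (((s, r₁ ^^^ s), (r₁ ^^^ r₂ ^^^ s, c₂ ^^^ s),
      (r₁ ^^^ r₂, B r₁ c₁)) ∈ calB m B) ∧
    (((s, r₁ ^^^ s), (s, c₁ ^^^ s), ((0 : ℕ), B r₂ c₂)) ∈ calB m B) := by
  intro s
  have hs : s < 2 ^ m := Nat.xor_lt_two_pow (hB.1 _ _ hr₁ hc₁) (hB.1 _ _ hr₂ hc₂)
  have h0 : 0 < 2 ^ m := Nat.two_pow_pos m
  refine ⟨?_, ?_, ?_, ?_, ?_, ?_, ?_, ?_⟩ <;> apply mem_calB_of_eq <;>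
    first
    | (repeat' first | assumption | apply Nat.xor_lt_two_pow); done
    | simp only [s, Nat.xor_assoc, Nat.xor_comm, Nat.xor_left_comm, Nat.xor_self,
        Nat.xor_xor_cancel_left, Nat.xor_zero, Nat.zero_xor]

/-- Lemma 3.2: with `s = (r₁ ∘ c₁) ⋆ (r₂ ∘ c₂)`, rows `R₁ = (0,r₂)`,
`R₂ = (c₁ ⋆ c₂, r₁)`, `R₃ = (c₁ ⋆ c₂ ⋆ s, r₂ ⋆ s)`, `R₄ = (s, r₁ ⋆ s)` and columns
`K₁ = (0,c₂)`, `K₂ = (r₁ ⋆ r₂, c₁)`, `K₃ = (r₁ ⋆ r₂ ⋆ s, c₂ ⋆ s)`, `K₄ = (s, c₁ ⋆ s)`,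
the latin square `𝓑` contains the stated eight triples. -/
theorem JB_entries (m : ℕ) (hm : 0 < m) (B : ℕ → ℕ → ℕ)
    (hB : IsLatinOp (2 ^ m) B)
    (r₁ r₂ c₁ c₂ : ℕ) (hr₁ : r₁ < 2 ^ m) (hr₂ : r₂ < 2 ^ m)
    (hc₁ : c₁ < 2 ^ m) (hc₂ : c₂ < 2 ^ m)
    (h₁ : r₁ ≠ r₂) (h₂ : c₁ ≠ c₂) (h₃ : B r₁ c₁ ≠ B r₂ c₂)
    (h₄ : r₁ ^^^ r₂ ≠ c₁ ^^^ c₂) :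
    let s := B r₁ c₁ ^^^ B r₂ c₂
    (((0, r₂), (0, c₂), ((0 : ℕ), B r₂ c₂)) ∈ calB m B) ∧
    (((0, r₂), (r₁ ^^^ r₂, c₁), (r₁ ^^^ r₂, B r₁ c₁)) ∈ calB m B) ∧
    (((c₁ ^^^ c₂, r₁), (0, c₂), (c₁ ^^^ c₂, c₁ ^^^ c₂ ^^^ B r₁ c₁)) ∈ calB m B) ∧
    (((c₁ ^^^ c₂, r₁), (r₁ ^^^ r₂, c₁),
      (r₁ ^^^ r₂ ^^^ c₁ ^^^ c₂, c₁ ^^^ c₂ ^^^ B r₂ c₂)) ∈ calB m B) ∧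
    (((c₁ ^^^ c₂ ^^^ s, r₂ ^^^ s), (r₁ ^^^ r₂ ^^^ s, c₂ ^^^ s),
      (r₁ ^^^ r₂ ^^^ c₁ ^^^ c₂, c₁ ^^^ c₂ ^^^ B r₂ c₂)) ∈ calB m B) ∧
    (((c₁ ^^^ c₂ ^^^ s, r₂ ^^^ s), (s, c₁ ^^^ s),
      (c₁ ^^^ c₂, c₁ ^^^ c₂ ^^^ B r₁ c₁)) ∈ calB m B) ∧
    (((s, r₁ ^^^ s), (r₁ ^^^ r₂ ^^^ s, c₂ ^^^ s),
      (r₁ ^^^ r₂, B r₁ c₁)) ∈ calB m B) ∧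
    (((s, r₁ ^^^ s), (s, c₁ ^^^ s), ((0 : ℕ), B r₂ c₂)) ∈ calB m B) :=
  JB_entries_general m B hB r₁ r₂ c₁ c₂ hr₁ hr₂ hc₁ hc₂
end
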